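/- arXiv:2507.23438 — 2 statements merged into one kernel-verified Lean document; each statement's English description precedes it below -/
import Mathlib

section
/- For every integer d ≥ 2, O_d = O_{d-1} + A_d; moreover, for every integer d ≥ 1, O_d < 2^d. -/
/-- The Macaulay bound `a^⟨t⟩`: writing the (unique, greedy) binomial expansion
`a = C(k(t),t) + C(k(t-1),t-1) + ⋯ + C(k(j),j)` with `k(t) > ⋯ > k(j) ≥ j ≥ 1`,
`macaulay t a = C(k(t)+1,t+1) + C(k(t-1)+1,t) + ⋯ + C(k(j)+1,j+1)`.
(The value at `t = 0` is irrelevant for the definitions below.) -/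
def macaulay : ℕ → ℕ → ℕ
  | 0, a => a
  | t+1, a =>
    if a = 0 then 0
    else
      Nat.choose (Nat.findGreatest (fun m => Nat.choose m (t+1) ≤ a) (a + t + 1) + 1) (t+2)
        + macaulay t (a - Nat.choose
            (Nat.findGreatest (fun m => Nat.choose m (t+1) ≤ a) (a + t + 1)) (t+1))

/-- A finite O-sequence `(a_0, a_1, …, a_s)`, encoded as a nonempty list of
positive integers with `a_0 = 1` and `a_{t+1} ≤ a_t^⟨t⟩` for all `1 ≤ t ≤ s-1`. -/
def IsOSeq (l : List ℕ) : Prop :=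
  l ≠ [] ∧ (∀ x ∈ l, 0 < x) ∧ l.getD 0 0 = 1 ∧
    ∀ t : ℕ, 1 ≤ t → t + 1 < l.length → l.getD (t+1) 0 ≤ macaulay t (l.getD t 0)

/-- `numOSeq d` = the number `O_d` of finite O-sequences of multiplicity `d`. -/
noncomputable def numOSeq (d : ℕ) : ℕ := {l : List ℕ | IsOSeq l ∧ l.sum = d}.ncard

/-- `numASeq d` = the number `A_d` of finite O-sequences of multiplicity `d`
whose last entry is strictly greater than `1`. -/
noncomputable def numASeq (d : ℕ) : ℕ :=
  {l : List ℕ | IsOSeq l ∧ l.sum = d ∧ 1 < l.getLastD 0}.ncard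

/-- `numOCond p n k d` = the number `O(p,n,k,d)` of finite O-sequences
`(a_0,…,a_s)` of multiplicity `d` with `s ≤ n`, `a_i = C(p-1+i, i)` for all
`0 ≤ i ≤ k` (in particular `s ≥ k`), and `a_i < C(p-1+i, i)` for `k < i ≤ s`. -/
noncomputable def numOCond (p n k d : ℕ) : ℕ :=
  {l : List ℕ | IsOSeq l ∧ l.sum = d ∧ l.length - 1 ≤ n ∧ k ≤ l.length - 1 ∧
    (∀ i ≤ k, l.getD i 0 = Nat.choose (p - 1 + i) i) ∧
    (∀ i : ℕ, k < i → i < l.length → l.getD i 0 < Nat.choose (p - 1 + i) i)}.ncard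

lemma macaulay_pos (t a : ℕ) (ha : 0 < a) : 0 < macaulay t a := by
  cases t with
  | zero => simpa [macaulay]
  | succ t =>
    rw [macaulay, if_neg (by omega)]
    have hK : t + 1 ≤ Nat.findGreatest (fun m => Nat.choose m (t+1) ≤ a) (a + t + 1) :=
      Nat.le_findGreatest (by omega) (by simp; omega)
    have : 0 < Nat.choose (Nat.findGreatest (fun m => Nat.choose m (t+1) ≤ a) (a+t+1) + 1) (t+2) :=
      Nat.choose_pos (by omega)
    omega

lemma length_le_sum (l : List ℕ) (h : ∀ x ∈ l, 0 < x) : l.length ≤ l.sum := by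
  induction l with
  | nil => simp
  | cons a l ih =>
    simp only [List.length_cons, List.sum_cons]
    have h1 := h a (by simp)
    have h2 := ih (fun x hx => h x (by simp [hx]))
    omega

lemma finite_posSum (d : ℕ) : {l : List ℕ | (∀ x ∈ l, 0 < x) ∧ l.sum = d}.Finite := by
  have hfin : {l : List (Fin (d+1)) | l.length ≤ d}.Finite := List.finite_length_le _ d
  apply Set.Finite.subset (hfin.image (List.map Fin.val))
  rintro l ⟨hpos, hsum⟩
  have hmem : ∀ x ∈ l, x < d + 1 := by
    intro x hx
    have := List.le_sum_of_mem hx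
    omega
  refine ⟨l.pmap (fun x h => (⟨x, h⟩ : Fin (d+1))) hmem, ?_, ?_⟩
  · show List.length _ ≤ d
    rw [List.length_pmap]
    have := length_le_sum l hpos
    omega
  · rw [List.map_pmap]
    exact (List.pmap_eq_map (f := id) hmem).trans (List.map_id l)

lemma finite_OS (d : ℕ) : {l : List ℕ | IsOSeq l ∧ l.sum = d}.Finite :=
  (finite_posSum d).subset (fun l hl => ⟨hl.1.2.1, hl.2⟩)

lemma isOSeq_append (l : List ℕ) (x : ℕ) (hl : l ≠ []) (hx : 0 < x)
    (hcond : l.length ≤ 1 ∨ x ≤ macaulay (l.length - 1) (l.getD (l.length - 1) 0))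
    (h : IsOSeq l) : IsOSeq (l ++ [x]) := by
  obtain ⟨-, hpos, hhead, hrec⟩ := h
  have hlen : 0 < l.length := List.length_pos_iff.2 hl
  refine ⟨by simp, ?_, ?_, ?_⟩
  · intro y hy
    rcases List.mem_append.1 hy with h | h
    · exact hpos y h
    · simp at h; omega
  · rw [List.getD_append _ _ _ _ hlen]; exact hhead
  · intro t ht htlen
    rw [List.length_append, List.length_singleton] at htlen
    by_cases hc : t + 1 < l.length
    · rw [List.getD_append _ _ _ _ hc, List.getD_append _ _ _ _ (by omega)]
      exact hrec t ht hc
    · have hteq : t + 1 = l.length := by omega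
      rw [List.getD_append_right _ _ _ _ (by omega), List.getD_append _ _ _ _ (by omega)]
      rw [hteq, Nat.sub_self]
      simp only [List.getD_cons_zero]
      rcases hcond with h1 | h1
      · omega
      · have : t = l.length - 1 := by omega
        rw [this]; exact h1

lemma isOSeq_of_append (l : List ℕ) (x : ℕ) (hl : l ≠ []) (h : IsOSeq (l ++ [x])) :
    IsOSeq l := by
  obtain ⟨-, hpos, hhead, hrec⟩ := h
  have hlen : 0 < l.length := List.length_pos_iff.2 hl
  refine ⟨hl, fun y hy => hpos y (by simp [hy]), ?_, ?_⟩
  · rw [List.getD_append _ _ _ _ hlen] at hhead; exact hhead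
  · intro t ht htlen
    have := hrec t ht (by rw [List.length_append, List.length_singleton]; omega)
    rwa [List.getD_append _ _ _ _ htlen, List.getD_append _ _ _ _ (by omega)] at this

lemma last_le_of_append (l : List ℕ) (x : ℕ) (h : IsOSeq (l ++ [x])) (hl : 2 ≤ l.length) :
    x ≤ macaulay (l.length - 1) (l.getD (l.length - 1) 0) := by
  obtain ⟨-, -, -, hrec⟩ := h
  have := hrec (l.length - 1) (by omega)
    (by rw [List.length_append, List.length_singleton]; omega)
  rw [show l.length - 1 + 1 = l.length by omega] at this
  rwa [List.getD_append_right _ _ _ _ (le_refl _), Nat.sub_self,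
    List.getD_cons_zero, List.getD_append _ _ _ _ (by omega)] at this

lemma getD_pos (l : List ℕ) (h : IsOSeq l) (i : ℕ) (hi : i < l.length) : 0 < l.getD i 0 := by
  rw [List.getD_eq_getElem _ _ hi]
  exact h.2.1 _ (List.getElem_mem _)

lemma getLastD_eq (l : List ℕ) (hl : l ≠ []) : l.getLastD 0 = l.getLast hl := by
  conv_lhs => rw [← List.dropLast_append_getLast hl]
  rw [List.getLastD_concat]

lemma len_ge_two (l : List ℕ) (h : IsOSeq l) (d : ℕ) (hd : 2 ≤ d) (hsum : l.sum = d) :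
    2 ≤ l.length := by
  by_contra hc
  obtain ⟨hne, -, hhead, -⟩ := h
  have h1 : l.length = 1 := by
    have := List.length_pos_iff.2 hne; omega
  obtain ⟨a, ha⟩ := List.length_eq_one_iff.1 h1
  subst ha
  simp at hhead hsum
  omega

lemma B_eq (d : ℕ) (hd : 2 ≤ d) :
    {l : List ℕ | IsOSeq l ∧ l.sum = d ∧ l.getLastD 0 = 1}
      = (· ++ [1]) '' {l : List ℕ | IsOSeq l ∧ l.sum = d - 1} := by
  ext l
  simp only [Set.mem_setOf_eq, Set.mem_image]
  constructor
  · rintro ⟨h, hsum, hlast⟩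
    have hne : l ≠ [] := h.1
    have hlen2 := len_ge_two l h d hd hsum
    have hdec := List.dropLast_append_getLast hne
    have hne' : l.dropLast ≠ [] := by
      rw [← List.length_pos_iff, List.length_dropLast]; omega
    have hlast1 : l.getLast hne = 1 := by rw [← getLastD_eq l hne]; exact hlast
    refine ⟨l.dropLast, ⟨?_, ?_⟩, ?_⟩
    · exact isOSeq_of_append _ _ hne' (by rwa [hdec])
    · rw [← hdec, List.sum_append, List.sum_singleton, hlast1] at hsum
      omega
    · rw [← hlast1, hdec]
  · rintro ⟨l', ⟨h', hsum'⟩, rfl⟩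
    have hne' : l' ≠ [] := h'.1
    have hlen : 0 < l'.length := List.length_pos_iff.2 hne'
    refine ⟨?_, ?_, ?_⟩
    · refine isOSeq_append _ _ hne' one_pos ?_ h'
      by_cases hll : l'.length ≤ 1
      · exact Or.inl hll
      · exact Or.inr (macaulay_pos _ _ (getD_pos l' h' _ (by omega)))
    · rw [List.sum_append, List.sum_singleton]; omega
    · exact List.getLastD_concat

lemma key1 (d : ℕ) (hd : 2 ≤ d) : numOSeq d = numOSeq (d - 1) + numASeq d := by
  have hS : {l : List ℕ | IsOSeq l ∧ l.sum = d}
      = {l : List ℕ | IsOSeq l ∧ l.sum = d ∧ l.getLastD 0 = 1}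
        ∪ {l : List ℕ | IsOSeq l ∧ l.sum = d ∧ 1 < l.getLastD 0} := by
    ext l
    simp only [Set.mem_setOf_eq, Set.mem_union]
    constructor
    · rintro ⟨h, hsum⟩
      have hne : l ≠ [] := h.1
      have : 0 < l.getLastD 0 := by
        rw [getLastD_eq l hne]; exact h.2.1 _ (List.getLast_mem hne)
      rcases eq_or_lt_of_le (Nat.one_le_of_lt this) with h1 | h1
      · exact Or.inl ⟨h, hsum, h1.symm⟩
      · exact Or.inr ⟨h, hsum, h1⟩
    · rintro (⟨h, hsum, -⟩ | ⟨h, hsum, -⟩) <;> exact ⟨h, hsum⟩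
  have finB : {l : List ℕ | IsOSeq l ∧ l.sum = d ∧ l.getLastD 0 = 1}.Finite :=
    (finite_OS d).subset (fun l h => ⟨h.1, h.2.1⟩)
  have finA : {l : List ℕ | IsOSeq l ∧ l.sum = d ∧ 1 < l.getLastD 0}.Finite :=
    (finite_OS d).subset (fun l h => ⟨h.1, h.2.1⟩)
  have hdisj : Disjoint {l : List ℕ | IsOSeq l ∧ l.sum = d ∧ l.getLastD 0 = 1}
      {l : List ℕ | IsOSeq l ∧ l.sum = d ∧ 1 < l.getLastD 0} := by
    rw [Set.disjoint_left]
    rintro l ⟨-, -, h1⟩ ⟨-, -, h2⟩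
    omega
  rw [numOSeq, numOSeq, numASeq, hS, Set.ncard_union_eq hdisj finB finA, B_eq d hd,
    Set.ncard_image_of_injOn (fun a _ b _ h => List.append_cancel_right h)]

lemma key2 (d : ℕ) (hd : 2 ≤ d) : numASeq d ≤ numOSeq (d - 1) := by
  refine Set.ncard_le_ncard_of_injOn (fun l => l.dropLast ++ [l.getLastD 0 - 1]) ?_ ?_
    (finite_OS (d - 1))
  · rintro l ⟨h, hsum, hlast⟩
    have hne : l ≠ [] := h.1
    have hlen2 := len_ge_two l h d hd hsum
    have hdec := List.dropLast_append_getLast hne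
    have hne' : l.dropLast ≠ [] := by
      rw [← List.length_pos_iff, List.length_dropLast]; omega
    have hlasteq : l.getLastD 0 = l.getLast hne := getLastD_eq l hne
    have hOS' : IsOSeq l.dropLast := isOSeq_of_append _ _ hne' (by rwa [hdec])
    constructor
    · refine isOSeq_append _ _ hne' (by omega) ?_ hOS'
      by_cases hll : l.dropLast.length ≤ 1
      · exact Or.inl hll
      · refine Or.inr ?_
        have hle := last_le_of_append l.dropLast (l.getLast hne) (by rwa [hdec]) (by omega)
        rw [hlasteq]
        omega
    · rw [List.sum_append, List.sum_singleton]
      rw [← hdec, List.sum_append, List.sum_singleton] at hsum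
      rw [hlasteq] at hlast ⊢
      omega
  · rintro a ⟨ha, -, ha1⟩ b ⟨hb, -, hb1⟩ heq
    simp only at heq
    have hda : a.dropLast = b.dropLast := by
      have := congrArg List.dropLast heq
      simpa [List.dropLast_concat] using this
    have hla : a.getLastD 0 - 1 = b.getLastD 0 - 1 := by
      have := congrArg (fun l => List.getLastD l 0) heq
      simpa [List.getLastD_concat] using this
    have hlab : a.getLastD 0 = b.getLastD 0 := by omega
    have hnea : a ≠ [] := ha.1
    have hneb : b ≠ [] := hb.1
    rw [← List.dropLast_append_getLast hnea, ← List.dropLast_append_getLast hneb,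
      hda, ← getLastD_eq a hnea, ← getLastD_eq b hneb, hlab]

lemma O1 : numOSeq 1 = 1 := by
  have hset : {l : List ℕ | IsOSeq l ∧ l.sum = 1} = {[1]} := by
    ext l
    simp only [Set.mem_setOf_eq, Set.mem_singleton_iff]
    constructor
    · rintro ⟨⟨hne, hpos, hhead, -⟩, hsum⟩
      obtain ⟨a, t, rfl⟩ := List.exists_cons_of_ne_nil hne
      simp only [List.getD_cons_zero] at hhead
      subst hhead
      rw [List.sum_cons] at hsum
      cases t with
      | nil => rfl
      | cons b t' =>
        have hb := hpos b (by simp)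
        rw [List.sum_cons] at hsum
        omega
    · rintro rfl
      refine ⟨⟨by simp, by simp, rfl, ?_⟩, by simp⟩
      intro t ht h
      simp at h
  rw [numOSeq, hset, Set.ncard_singleton]

/-- For every integer `d ≥ 2`, `O_d = O_{d-1} + A_d`;
moreover, for every integer `d ≥ 1`, `O_d < 2^d`. -/
theorem Od_eq_and_lt_two_pow :
    (∀ d : ℕ, 2 ≤ d → numOSeq d = numOSeq (d - 1) + numASeq d) ∧
    (∀ d : ℕ, 1 ≤ d → numOSeq d < 2 ^ d) := by
  constructor
  · exact key1
  · intro d hd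
    induction d, hd using Nat.le_induction with
    | base => rw [O1]; norm_num
    | succ d hd IH =>
      have h1 := key1 (d + 1) (by omega)
      have h2 := key2 (d + 1) (by omega)
      simp only [Nat.add_sub_cancel] at h1 h2
      have hp : 2 ^ (d + 1) = 2 ^ d * 2 := pow_succ 2 d
      omega
end

section
/- For every integer d ≥ 4, A_{d-1} + A_{d-2} = O_{d-1} - O_{d-3}. -/
lemma finite_OSet (m : ℕ) : {l : List ℕ | IsOSeq l ∧ l.sum = m}.Finite := by
  have h := (List.finite_length_le (Fin (m+1)) m).image (List.map Fin.val)
  refine h.subset ?_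
  rintro l ⟨⟨hne, hpos, _, _⟩, hsum⟩
  refine ⟨l.map (fun x => ⟨x % (m+1), Nat.mod_lt _ (Nat.succ_pos m)⟩), ?_, ?_⟩
  · simp only [Set.mem_setOf_eq, List.length_map]
    have := length_le_sum l hpos
    omega
  · rw [List.map_map]
    have hmod : ∀ x ∈ l, x % (m+1) = x := fun x hx =>
      Nat.mod_eq_of_lt (by have := List.le_sum_of_mem hx; omega)
    calc l.map _ = l.map id := List.map_congr_left (fun x hx => by
            simp [Function.comp, hmod x hx])
      _ = l := List.map_id l

lemma getD_concat_eq (l : List ℕ) (b : ℕ) : (l ++ [b]).getD l.length 0 = b := by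
  rw [List.getD_append_right _ _ _ _ le_rfl]; simp

lemma isOSeq_concat_one {r : List ℕ} (hr : r ≠ []) : IsOSeq (r ++ [1]) ↔ IsOSeq r := by
  have hlen : 0 < r.length := List.length_pos_iff.mpr hr
  constructor
  · rintro ⟨_, hpos, hhead, hmac⟩
    refine ⟨hr, fun x hx => hpos x (by simp [hx]), ?_, ?_⟩
    · rw [← hhead, List.getD_append _ _ _ _ hlen]
    · intro t ht htl
      have h1 : t + 1 < (r ++ [1]).length := by simp; omega
      have := hmac t ht h1
      rwa [List.getD_append _ _ _ _ htl, List.getD_append _ _ _ _ (by omega)] at this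
  · rintro ⟨_, hpos, hhead, hmac⟩
    refine ⟨by simp, ?_, ?_, ?_⟩
    · intro x hx
      rcases List.mem_append.mp hx with h | h
      · exact hpos x h
      · simp at h; omega
    · rw [List.getD_append _ _ _ _ hlen]; exact hhead
    · intro t ht htl
      simp only [List.length_append, List.length_singleton] at htl
      rcases lt_or_eq_of_le (Nat.lt_succ_iff.mp htl) with h | h
      · rw [List.getD_append _ _ _ _ h, List.getD_append _ _ _ _ (by omega)]
        exact hmac t ht h
      · have ht' : t < r.length := by omega
        rw [List.getD_append _ _ _ _ ht']
        have heq : (r ++ [1]).getD (t+1) 0 = 1 := by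
          rw [h]; exact getD_concat_eq r 1
        rw [heq]
        have hmem : r.getD t 0 ∈ r := by
          rw [List.getD_eq_getElem _ _ ht']; exact List.getElem_mem _
        exact macaulay_pos t _ (hpos _ hmem)

lemma getLastD_eq_getLast (l : List ℕ) (hne : l ≠ []) :
    l.getLastD 0 = l.getLast hne := by
  conv_lhs => rw [← List.dropLast_append_getLast hne]
  exact List.getLastD_concat

lemma numOSeq_succ (m : ℕ) (hm : 1 ≤ m) : numOSeq (m + 1) = numASeq (m + 1) + numOSeq m := by
  classical
  set S1 := {l : List ℕ | IsOSeq l ∧ l.sum = m + 1 ∧ 1 < l.getLastD 0} with hS1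
  set S0 := {l : List ℕ | IsOSeq l ∧ l.sum = m + 1 ∧ l.getLastD 0 = 1} with hS0
  have hfin := finite_OSet (m+1)
  have hsub1 : S1 ⊆ {l | IsOSeq l ∧ l.sum = m+1} := fun l hl => ⟨hl.1, hl.2.1⟩
  have hsub0 : S0 ⊆ {l | IsOSeq l ∧ l.sum = m+1} := fun l hl => ⟨hl.1, hl.2.1⟩
  have hunion : {l : List ℕ | IsOSeq l ∧ l.sum = m + 1} = S1 ∪ S0 := by
    ext l
    constructor
    · rintro ⟨h1, h2⟩
      have hne := h1.1
      have hveq := getLastD_eq_getLast l hne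
      have hmem := List.getLast_mem hne
      have hpos := h1.2.1 _ hmem
      rcases Nat.lt_or_ge 1 (l.getLastD 0) with h | h
      · exact Or.inl ⟨h1, h2, h⟩
      · exact Or.inr ⟨h1, h2, by omega⟩
    · rintro (⟨h1, h2, _⟩ | ⟨h1, h2, _⟩) <;> exact ⟨h1, h2⟩
  have himg : S0 = (fun l => l ++ [1]) '' {l : List ℕ | IsOSeq l ∧ l.sum = m} := by
    ext l
    constructor
    · rintro ⟨h1, h2, h3⟩
      have hne := h1.1
      have hlast : l.getLast hne = 1 := by rw [← getLastD_eq_getLast l hne]; exact h3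
      have hdec : l.dropLast ++ [1] = l := by
        rw [← hlast]; exact List.dropLast_append_getLast hne
      have hdne : l.dropLast ≠ [] := by
        intro h
        rw [h, List.nil_append] at hdec
        rw [← hdec] at h2
        simp at h2
        omega
      refine ⟨l.dropLast, ⟨?_, ?_⟩, hdec⟩
      · exact (isOSeq_concat_one hdne).mp (by rwa [hdec])
      · have hs : (l.dropLast ++ [1]).sum = m + 1 := by rw [hdec]; exact h2
        simp at hs
        omega
    · rintro ⟨r, ⟨h1, h2⟩, rfl⟩
      exact ⟨(isOSeq_concat_one h1.1).mpr h1, by simp [h2],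
        List.getLastD_concat⟩
  have hdisj : Disjoint S1 S0 := by
    rw [Set.disjoint_left]
    rintro l ⟨_, _, h⟩ ⟨_, _, h'⟩
    omega
  have hf1 : S1.Finite := hfin.subset hsub1
  have hf0 : S0.Finite := hfin.subset hsub0
  calc numOSeq (m+1) = (S1 ∪ S0).ncard := by rw [numOSeq, hunion]
    _ = S1.ncard + S0.ncard := Set.ncard_union_eq hdisj hf1 hf0
    _ = numASeq (m+1) + numOSeq m := by
        congr 1
        rw [himg, Set.ncard_image_of_injective _ (List.append_left_injective [1]), numOSeq]

/-- For every integer `d ≥ 4`, `A_{d-1} + A_{d-2} = O_{d-1} - O_{d-3}`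
(as integers). -/
theorem Ad_add_eq_Od_sub (d : ℕ) (hd : 4 ≤ d) :
    (numASeq (d - 1) : ℤ) + (numASeq (d - 2) : ℤ)
      = (numOSeq (d - 1) : ℤ) - (numOSeq (d - 3) : ℤ) := by
  have h1 := numOSeq_succ (d - 2) (by omega)
  have h2 := numOSeq_succ (d - 3) (by omega)
  have e1 : d - 2 + 1 = d - 1 := by omega
  have e2 : d - 3 + 1 = d - 2 := by omega
  rw [e1] at h1
  rw [e2] at h2
  rw [h1, h2]
  push_cast
  ring
end
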